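/- Let A ∈ R^{n×n} be real positive definite (i.e., A + Aᵀ is symmetric positive definite, so A is invertible), let μ = λ_min(A + Aᵀ)/2 and ν = λ_min(A^{−1} + (A^{−1})ᵀ)/2. Then for NGMRES with any window size m and any initial guess x_0, the residuals satisfy ‖r_{k+1}‖₂ ≤ √(1 − μν) ‖r_k‖₂ for all k. -/

import Mathlib

/-! Choosing `β = (α - 1, 0, …, 0)` shows that NGMRES does at least as well as the Richardson step
`x_k - α r_k`, whose residual is `r - α A r` for `r = r_k`. The best `α` leaves
`‖r‖² - (r ⬝ Ar)² / ‖Ar‖²`. Now `r ⬝ Ar = ½ r ⬝ (A + Aᵀ) r ≥ μ ‖r‖²`, and writing `r = A⁻¹ (A r)` the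
same argument for `A⁻¹` gives `r ⬝ Ar ≥ ν ‖Ar‖²`; multiplying, `(r ⬝ Ar)² ≥ μ ν ‖r‖² ‖Ar‖²`. -/

open Matrix Filter

noncomputable section

/-- The residual `r(x) = A x - b` of the linear system `A x = b`. -/
def residv {n : ℕ} (A : Matrix (Fin n) (Fin n) ℝ) (b x : Fin n → ℝ) : Fin n → ℝ :=
  A.mulVec x - b

/-- The Euclidean 2-norm on `Fin n → ℝ`. -/
def norm2 {n : ℕ} (x : Fin n → ℝ) : ℝ := Real.sqrt (x ⬝ᵥ x)

/-- The fixed-point map `q(x) = M x + b` with `M = I - A`. -/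
def qmap {n : ℕ} (A : Matrix (Fin n) (Fin n) ℝ) (b x : Fin n → ℝ) : Fin n → ℝ :=
  (1 - A).mulVec x + b

/-- One NGMRES update from step `k`, with window `mk` and coefficients `β`:
`x_{k+1} = q(x_k) + ∑_{i=0}^{mk} β_i (q(x_k) - x_{k-i})`. -/
def ngmresUpdate {n : ℕ} (A : Matrix (Fin n) (Fin n) ℝ) (b : Fin n → ℝ)
    (x : ℕ → Fin n → ℝ) (β : ℕ → ℝ) (k mk : ℕ) : Fin n → ℝ :=
  qmap A b (x k) + ∑ i ∈ Finset.range (mk + 1), β i • (qmap A b (x k) - x (k - i))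

/-- The NGMRES iteration with window function `mk` (e.g. `mk k = min k m` for NGMRES(m),
`mk k = k` for full NGMRES): each step uses coefficients minimizing the 2-norm of the
next residual. -/
def IsNGMRES {n : ℕ} (A : Matrix (Fin n) (Fin n) ℝ) (b x0 : Fin n → ℝ) (mk : ℕ → ℕ)
    (x : ℕ → Fin n → ℝ) (β : ℕ → ℕ → ℝ) : Prop :=
  x 0 = x0 ∧ ∀ k, x (k + 1) = ngmresUpdate A b x (β k) k (mk k) ∧
    ∀ β' : ℕ → ℝ, norm2 (residv A b (x (k + 1))) ≤
      norm2 (residv A b (ngmresUpdate A b x β' k (mk k)))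

/-- The Krylov subspace `span {r0, A r0, …, A^{k-1} r0}`. -/
def krylov {n : ℕ} (A : Matrix (Fin n) (Fin n) ℝ) (r0 : Fin n → ℝ) (k : ℕ) :
    Submodule ℝ (Fin n → ℝ) :=
  Submodule.span ℝ {v | ∃ i < k, v = (A ^ i).mulVec r0}

/-- GMRES: `x_k` minimizes the residual 2-norm over the affine space `x0 + K_k`. -/
def IsGMRES {n : ℕ} (A : Matrix (Fin n) (Fin n) ℝ) (b x0 : Fin n → ℝ)
    (x : ℕ → Fin n → ℝ) : Prop :=
  x 0 = x0 ∧ ∀ k, x k - x0 ∈ krylov A (residv A b x0) k ∧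
    ∀ y : Fin n → ℝ, y - x0 ∈ krylov A (residv A b x0) k →
      norm2 (residv A b (x k)) ≤ norm2 (residv A b y)

/-- One Anderson acceleration update from step `k`, with window `mk`:
`x_{k+1} = q(x_k) + ∑_{i=1}^{mk} γ_i (q(x_k) - q(x_{k-i}))`. -/
def aaUpdate {n : ℕ} (A : Matrix (Fin n) (Fin n) ℝ) (b : Fin n → ℝ)
    (x : ℕ → Fin n → ℝ) (γ : ℕ → ℝ) (k mk : ℕ) : Fin n → ℝ :=
  qmap A b (x k) + ∑ i ∈ Finset.Icc 1 mk, γ i • (qmap A b (x k) - qmap A b (x (k - i)))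

/-- The Anderson acceleration least-squares objective
`r(x_k) + ∑_{i=1}^{mk} γ_i (r(x_k) - r(x_{k-i}))`. -/
def aaObj {n : ℕ} (A : Matrix (Fin n) (Fin n) ℝ) (b : Fin n → ℝ)
    (x : ℕ → Fin n → ℝ) (γ : ℕ → ℝ) (k mk : ℕ) : Fin n → ℝ :=
  residv A b (x k) + ∑ i ∈ Finset.Icc 1 mk, γ i • (residv A b (x k) - residv A b (x (k - i)))

/-- Anderson acceleration with window function `mk`. -/
def IsAA {n : ℕ} (A : Matrix (Fin n) (Fin n) ℝ) (b x0 : Fin n → ℝ) (mk : ℕ → ℕ)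
    (x : ℕ → Fin n → ℝ) (γ : ℕ → ℕ → ℝ) : Prop :=
  x 0 = x0 ∧ ∀ k, x (k + 1) = aaUpdate A b x (γ k) k (mk k) ∧
    ∀ γ' : ℕ → ℝ, norm2 (aaObj A b x (γ k) k (mk k)) ≤ norm2 (aaObj A b x γ' k (mk k))

/-- The spectral norm `‖A‖₂` (the ℓ²→ℓ² operator norm). -/
def specNorm {n : ℕ} (A : Matrix (Fin n) (Fin n) ℝ) : ℝ :=
  ‖LinearMap.toContinuousLinearMap (Matrix.toEuclideanLin A)‖

/-- The spectral radius of a real matrix (computed over `ℂ`). -/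
def specRad {n : ℕ} (M : Matrix (Fin n) (Fin n) ℝ) : ℝ :=
  (spectralRadius ℂ (M.map Complex.ofReal)).toReal

section Spectrum

variable {ι : Type*} [Fintype ι] [DecidableEq ι]

theorem Matrix.IsHermitian.sInf_spectrum_mul_dotProduct_self_le {S : Matrix ι ι ℝ}
    (hS : S.IsHermitian) (x : ι → ℝ) :
    sInf (spectrum ℝ S) * (x ⬝ᵥ x) ≤ x ⬝ᵥ S *ᵥ x := by
  set c := sInf (spectrum ℝ S)
  have hshift : (-algebraMap ℝ _ c + S).PosSemidef := by
    refine posSemidef_iff_isHermitian_and_spectrum_nonneg.2 ⟨?_, fun t ht => ?_⟩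
    · exact ((IsSelfAdjoint.all c).algebraMap _).neg.add hS
    · have hmem : t + c ∈ spectrum ℝ S := spectrum.add_mem_iff.2 ht
      have := csInf_le finite_real_spectrum.bddBelow hmem
      simp only [Set.mem_ofPred_eq]
      linarith
  have h := hshift.dotProduct_mulVec_nonneg x
  simp only [star_trivial, add_mulVec, neg_mulVec, Algebra.algebraMap_eq_smul_one, smul_mulVec,
    one_mulVec, dotProduct_add, dotProduct_neg, dotProduct_smul, smul_eq_mul] at h
  linarith

theorem Matrix.PosSemidef.sInf_spectrum_nonneg {S : Matrix ι ι ℝ} (hS : S.PosSemidef) :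
    0 ≤ sInf (spectrum ℝ S) :=
  Real.sInf_nonneg fun _ ht => posSemidef_iff_isHermitian_and_spectrum_nonneg.1 hS |>.2 ht

end Spectrum

section PositiveReal

variable {ι : Type*} [Fintype ι]

theorem Matrix.dotProduct_add_transpose_mulVec (A : Matrix ι ι ℝ) (x : ι → ℝ) :
    x ⬝ᵥ (A + Aᵀ) *ᵥ x = 2 * (x ⬝ᵥ A *ᵥ x) := by
  rw [add_mulVec, dotProduct_add, dotProduct_mulVec x Aᵀ, vecMul_transpose, dotProduct_comm]
  ring

variable [DecidableEq ι]

theorem Matrix.sInf_spectrum_add_transpose_div_two_mul_le (A : Matrix ι ι ℝ) (x : ι → ℝ) :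
    sInf (spectrum ℝ (A + Aᵀ)) / 2 * (x ⬝ᵥ x) ≤ x ⬝ᵥ A *ᵥ x := by
  have hS : (A + Aᵀ).IsHermitian := by
    simpa [conjTranspose_eq_transpose_of_trivial] using isHermitian_add_transpose_self A
  have := hS.sInf_spectrum_mul_dotProduct_self_le x
  rw [dotProduct_add_transpose_mulVec] at this
  linarith

variable {A : Matrix ι ι ℝ}

theorem Matrix.isUnit_det_of_posDef_add_transpose (hA : (A + Aᵀ).PosDef) : IsUnit A.det := by
  refine (isUnit_iff_isUnit_det A).1 (mulVec_injective_iff_isUnit.1 fun u v huv => ?_)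
  by_contra hne
  have hpos := hA.dotProduct_mulVec_pos (sub_ne_zero.2 hne)
  rw [star_trivial, dotProduct_add_transpose_mulVec, mulVec_sub, huv, sub_self,
    dotProduct_zero, mul_zero] at hpos
  exact hpos.false

theorem Matrix.posSemidef_inv_add_transpose (hA : IsUnit A.det) (hpd : (A + Aᵀ).PosSemidef) :
    (A⁻¹ + (A⁻¹)ᵀ).PosSemidef := by
  have hcongr : A⁻¹ + (A⁻¹)ᵀ = (A⁻¹)ᴴ * (A + Aᵀ) * A⁻¹ := by
    rw [conjTranspose_eq_transpose_of_trivial, mul_add, add_mul, Matrix.mul_assoc,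
      mul_nonsing_inv _ hA, Matrix.mul_one, ← transpose_mul, mul_nonsing_inv _ hA,
      transpose_one, Matrix.one_mul, add_comm]
  rw [hcongr]
  exact hpd.conjTranspose_mul_mul_same _

theorem Matrix.sInf_spectrum_inv_add_transpose_div_two_mul_le (hA : IsUnit A.det) (x : ι → ℝ) :
    sInf (spectrum ℝ (A⁻¹ + (A⁻¹)ᵀ)) / 2 * (A *ᵥ x ⬝ᵥ A *ᵥ x) ≤ x ⬝ᵥ A *ᵥ x := by
  have := sInf_spectrum_add_transpose_div_two_mul_le A⁻¹ (A *ᵥ x)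
  rwa [mulVec_mulVec, nonsing_inv_mul _ hA, one_mulVec, dotProduct_comm (A *ᵥ x) x] at this

end PositiveReal

theorem Matrix.exists_dotProduct_sub_smul_self_le {ι : Type*} [Fintype ι] (r w : ι → ℝ)
    {μ ν : ℝ} (hμ : 0 ≤ μ) (hν : 0 ≤ ν) (hr : μ * (r ⬝ᵥ r) ≤ r ⬝ᵥ w)
    (hw : ν * (w ⬝ᵥ w) ≤ r ⬝ᵥ w) :
    ∃ α : ℝ, (r - α • w) ⬝ᵥ (r - α • w) ≤ (1 - μ * ν) * (r ⬝ᵥ r) := by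
  have hrr : 0 ≤ r ⬝ᵥ r := dotProduct_self_star_nonneg r
  rcases eq_or_ne w 0 with rfl | hw0
  · refine ⟨0, ?_⟩
    rw [dotProduct_zero] at hr
    simp only [zero_smul, sub_zero]
    nlinarith
  have hs : 0 < w ⬝ᵥ w :=
    (dotProduct_self_star_nonneg w).lt_of_ne' (mt dotProduct_self_eq_zero.1 hw0)
  refine ⟨(r ⬝ᵥ w) / (w ⬝ᵥ w), ?_⟩
  have hexpand : (r - ((r ⬝ᵥ w) / (w ⬝ᵥ w)) • w) ⬝ᵥ (r - ((r ⬝ᵥ w) / (w ⬝ᵥ w)) • w)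
      = r ⬝ᵥ r - (r ⬝ᵥ w) ^ 2 / (w ⬝ᵥ w) := by
    simp only [sub_dotProduct, dotProduct_sub, smul_dotProduct, dotProduct_smul, smul_eq_mul,
      dotProduct_comm w r]
    field_simp
    ring
  have hprod : μ * (r ⬝ᵥ r) * (ν * (w ⬝ᵥ w)) ≤ (r ⬝ᵥ w) ^ 2 := by
    rw [sq]
    exact mul_le_mul hr hw (by positivity) ((mul_nonneg hμ hrr).trans hr)
  have hquot : μ * ν * (r ⬝ᵥ r) ≤ (r ⬝ᵥ w) ^ 2 / (w ⬝ᵥ w) := by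
    rw [le_div_iff₀ hs]
    linarith
  rw [hexpand]
  linarith

section NGMRES

variable {n : ℕ} (A : Matrix (Fin n) (Fin n) ℝ) (b : Fin n → ℝ)

theorem norm2_le_sqrt_mul_norm2 {x y : Fin n → ℝ} {c : ℝ} (h : x ⬝ᵥ x ≤ c * (y ⬝ᵥ y)) :
    norm2 x ≤ √c * norm2 y := by
  have hy : 0 ≤ y ⬝ᵥ y := dotProduct_self_star_nonneg y
  rw [norm2, norm2, ← Real.sqrt_mul' c hy]
  exact Real.sqrt_le_sqrt h

theorem residv_sub_smul (y v : Fin n → ℝ) (α : ℝ) :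
    residv A b (y - α • v) = residv A b y - α • A *ᵥ v := by
  simp only [residv, mulVec_sub, mulVec_smul]
  abel

theorem qmap_eq_sub_residv (y : Fin n → ℝ) : qmap A b y = y - residv A b y := by
  simp only [qmap, residv, sub_mulVec, one_mulVec]
  abel

theorem ngmresUpdate_single_zero (x : ℕ → Fin n → ℝ) (k mk : ℕ) (α : ℝ) :
    ngmresUpdate A b x (Pi.single 0 (α - 1)) k mk = x k - α • residv A b (x k) := by
  rw [ngmresUpdate, Finset.sum_eq_single_of_mem 0 (by simp) fun i _ hi => by simp [hi],
    Pi.single_eq_same, Nat.sub_zero, qmap_eq_sub_residv]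
  module

variable {A b}

theorem IsNGMRES.norm2_residv_succ_le {x0 : Fin n → ℝ} {mk : ℕ → ℕ} {x : ℕ → Fin n → ℝ}
    {β : ℕ → ℕ → ℝ} (h : IsNGMRES A b x0 mk x β) (k : ℕ) (α : ℝ) :
    norm2 (residv A b (x (k + 1))) ≤ norm2 (residv A b (x k) - α • A *ᵥ residv A b (x k)) := by
  have := (h.2 k).2 (Pi.single 0 (α - 1))
  rwa [ngmresUpdate_single_zero, residv_sub_smul] at this

end NGMRES

/-- if `A + Aᵀ` is symmetric positive definite, `μ = λ_min(A + Aᵀ)/2`,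
`ν = λ_min(A⁻¹ + (A⁻¹)ᵀ)/2`, then `‖r_{k+1}‖ ≤ √(1 - μν) ‖r_k‖` for NGMRES(m). -/
theorem stmt16 (n : ℕ) (A : Matrix (Fin n) (Fin n) ℝ) (b x0 : Fin n → ℝ)
    (hpd : (A + Aᵀ).PosDef) (m : ℕ)
    (x : ℕ → Fin n → ℝ) (β : ℕ → ℕ → ℝ)
    (hNG : IsNGMRES A b x0 (fun k => min k m) x β) :
    ∀ k, norm2 (residv A b (x (k + 1))) ≤
      Real.sqrt (1 - (sInf (spectrum ℝ (A + Aᵀ)) / 2) *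
          (sInf (spectrum ℝ (A⁻¹ + (A⁻¹)ᵀ)) / 2)) *
        norm2 (residv A b (x k)) := by
  intro k
  have hdet := isUnit_det_of_posDef_add_transpose hpd
  have hμ : 0 ≤ sInf (spectrum ℝ (A + Aᵀ)) / 2 :=
    div_nonneg hpd.posSemidef.sInf_spectrum_nonneg zero_le_two
  have hν : 0 ≤ sInf (spectrum ℝ (A⁻¹ + (A⁻¹)ᵀ)) / 2 :=
    div_nonneg (posSemidef_inv_add_transpose hdet hpd.posSemidef).sInf_spectrum_nonneg zero_le_two
  obtain ⟨α, hα⟩ := exists_dotProduct_sub_smul_self_le _ _ hμ hν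
    (sInf_spectrum_add_transpose_div_two_mul_le A (residv A b (x k)))
    (sInf_spectrum_inv_add_transpose_div_two_mul_le hdet (residv A b (x k)))
  exact (hNG.norm2_residv_succ_le k α).trans (norm2_le_sqrt_mul_norm2 hα)
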